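/- In the ILT model, for t > 0 the Wiener index satisfies W(G_t) = 4^t·(W(G_0) + (e_0 + n_0)·(1 − (3/4)^t)). -/

import Mathlib

open SimpleGraph Finset

universe u
variable {V : Type u}

/-- One step of the Iterated Local Transitivity model: every vertex `x` gets a
clone `Sum.inr x` joined to `x` and all of its neighbours; old vertices are `Sum.inl`. -/
def ILTstep (G : SimpleGraph V) : SimpleGraph (V ⊕ V) where
  Adj a b := match a, b with
    | Sum.inl x, Sum.inl y => G.Adj x y
    | Sum.inl x, Sum.inr y => x = y ∨ G.Adj x y
    | Sum.inr x, Sum.inl y => x = y ∨ G.Adj x y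
    | Sum.inr _, Sum.inr _ => False
  symm := by
    constructor
    rintro (x | x) (y | y) h
    · exact (h : G.Adj x y).symm
    · exact h.imp Eq.symm (fun hh => hh.symm)
    · exact h.imp Eq.symm (fun hh => hh.symm)
    · exact h.elim
  loopless := by
    constructor
    rintro (x | x) h
    · exact (h : G.Adj x x).ne rfl
    · exact h

instance ILTstepDecAdj (G : SimpleGraph V) [DecidableEq V] [DecidableRel G.Adj] :
    DecidableRel (ILTstep G).Adj := fun a b =>
  match a, b with
  | Sum.inl x, Sum.inl y => inferInstanceAs (Decidable (G.Adj x y))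
  | Sum.inl x, Sum.inr y => inferInstanceAs (Decidable (x = y ∨ G.Adj x y))
  | Sum.inr x, Sum.inl y => inferInstanceAs (Decidable (x = y ∨ G.Adj x y))
  | Sum.inr _, Sum.inr _ => inferInstanceAs (Decidable False)

/-- The vertex set of the ILT model at time `t`. -/
def ILTV (V : Type u) : ℕ → Type u
  | 0 => V
  | t + 1 => ILTV V t ⊕ ILTV V t

/-- The graph of the ILT model at time `t`, starting from `G`. -/
def ILTG (G : SimpleGraph V) : (t : ℕ) → SimpleGraph (ILTV V t)
  | 0 => G
  | t + 1 => ILTstep (ILTG G t)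

instance ILTVFintype [Fintype V] : ∀ t, Fintype (ILTV V t)
  | 0 => inferInstanceAs (Fintype V)
  | t + 1 => letI := ILTVFintype t
             inferInstanceAs (Fintype (ILTV V t ⊕ ILTV V t))

instance ILTVDecEq [DecidableEq V] : ∀ t, DecidableEq (ILTV V t)
  | 0 => inferInstanceAs (DecidableEq V)
  | t + 1 => letI := ILTVDecEq t
             inferInstanceAs (DecidableEq (ILTV V t ⊕ ILTV V t))

instance ILTGDecAdj (G : SimpleGraph V) [DecidableEq V] [DecidableRel G.Adj] :
    ∀ t, DecidableRel (ILTG G t).Adj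
  | 0 => inferInstanceAs (DecidableRel G.Adj)
  | t + 1 => letI : DecidableEq (ILTV V t) := ILTVDecEq t
             letI : DecidableRel (ILTG G t).Adj := ILTGDecAdj G t
             ILTstepDecAdj (ILTG G t)

/-- The volume of a graph: the sum of the degrees of its vertices. -/
def graphVol [Fintype V] (G : SimpleGraph V) [DecidableRel G.Adj] : ℕ :=
  ∑ v, G.degree v

/-- The Wiener index: the sum of distances over unordered pairs of vertices. -/
noncomputable def wienerIndex [Fintype V] (G : SimpleGraph V) : ℕ :=
  (∑ x : V, ∑ y : V, G.dist x y) / 2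


/-! Sending each clone `x'` in `G_{t+1}` back to `x` maps every edge to an edge or to a single
vertex, so it does not increase distances; together with detours through a neighbour this pins
down every distance of `G_{t+1}` in terms of `G_t`: `d(x, y)` is unchanged,
`d(x, y') = d(x, y) + [x = y]` and `d(x', y') = d(x, y) + [x ~ y]` (clones are pairwise
non-adjacent). Summing over all pairs gives `W(G_{t+1}) = 4 W(G_t) + e_t + n_t`,
while counting adjacencies gives `e_{t+1} = 3 e_t + n_t`, so `e_t + n_t = 3^t (e_0 + n_0)`; the
recurrence then solves to `W(G_t) + 3^t (e_0 + n_0) = 4^t (W(G_0) + e_0 + n_0)`. -/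

theorem Fintype.even_sum_sum_of_symm {α : Type*} [Fintype α] (f : α → α → ℕ)
    (hsymm : ∀ x y, f x y = f y x) (hdiag : ∀ x, f x x = 0) : Even (∑ x, ∑ y, f x y) := by
  rw [← ZMod.natCast_eq_zero_iff_even, ← Finset.sum_product', Nat.cast_sum]
  refine Finset.sum_ninvolution Prod.swap (fun p => ?_) (fun p hp heq => hp ?_) (by simp)
    Prod.swap_swap
  · rw [Prod.fst_swap, Prod.snd_swap, hsymm p.2, CharTwo.add_self_eq_zero]
  · rw [show p.2 = p.1 from congrArg Prod.fst heq, hdiag, Nat.cast_zero]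

lemma two_mul_wienerIndex [Fintype V] (G : SimpleGraph V) :
    2 * wienerIndex G = ∑ x, ∑ y, G.dist x y :=
  Nat.two_mul_div_two_of_even <|
    Fintype.even_sum_sum_of_symm _ (fun _ _ => dist_comm) (fun _ => dist_self)

namespace SimpleGraph

variable {G : SimpleGraph V}

lemma sum_sum_adj_ite [Fintype V] [DecidableRel G.Adj] :
    ∑ x, ∑ y, (if G.Adj x y then 1 else 0) = 2 * #G.edgeFinset := by
  simp only [Finset.sum_boole, Nat.cast_id, ← neighborFinset_eq_filter,
    card_neighborFinset_eq_degree]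
  exact G.sum_degrees_eq_twice_card_edges

lemma Connected.exists_adj_dist_add_one (hG : G.Connected) {x y : V} (hxy : x ≠ y) :
    ∃ u, G.Adj x u ∧ G.dist u y + 1 = G.dist x y := by
  obtain ⟨w, hw⟩ := hG.exists_walk_length_eq_dist x y
  obtain ⟨u, hxu, w', rfl⟩ := Walk.exists_eq_cons_of_ne hxy w
  refine ⟨u, hxu, le_antisymm ?_ ?_⟩
  · rw [← hw, Walk.length_cons]
    exact Nat.add_le_add_right (dist_le w') 1
  · calc G.dist x y ≤ G.dist x u + G.dist u y := hG.dist_triangle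
      _ = G.dist u y + 1 := by rw [dist_eq_one_iff_adj.mpr hxu, add_comm]

lemma Connected.dist_le_dist_of_forall_adj {W : Type*} {H : SimpleGraph W} (hG : G.Connected)
    (f : W → V) (hf : ∀ a b, H.Adj a b → G.dist (f a) (f b) ≤ 1) {a b : W}
    (hab : H.Reachable a b) : G.dist (f a) (f b) ≤ H.dist a b := by
  have hwalk : ∀ {a b : W} (w : H.Walk a b), G.dist (f a) (f b) ≤ w.length := by
    intro a b w
    induction w with
    | nil => simp
    | @cons a c b h w ih =>
      calc G.dist (f a) (f b) ≤ G.dist (f a) (f c) + G.dist (f c) (f b) := hG.dist_triangle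
        _ ≤ 1 + w.length := Nat.add_le_add (hf a c h) ih
        _ = (w.cons h).length := by rw [Walk.length_cons, add_comm]
  obtain ⟨w, hw⟩ := hab.exists_walk_length_eq_dist
  exact hw ▸ hwalk w

end SimpleGraph

section ILTstep

variable (G : SimpleGraph V) {x y : V}

@[simp] lemma ILTstep_adj_inl_inl : (ILTstep G).Adj (.inl x) (.inl y) ↔ G.Adj x y := Iff.rfl

@[simp] lemma ILTstep_adj_inl_inr : (ILTstep G).Adj (.inl x) (.inr y) ↔ x = y ∨ G.Adj x y :=
  Iff.rfl

@[simp] lemma ILTstep_adj_inr_inl : (ILTstep G).Adj (.inr x) (.inl y) ↔ x = y ∨ G.Adj x y :=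
  Iff.rfl

@[simp] lemma ILTstep_not_adj_inr_inr : ¬(ILTstep G).Adj (.inr x) (.inr y) := id

def ILTstep.inlHom : G →g ILTstep G where
  toFun := Sum.inl
  map_rel' := id

lemma ILTstep_connected (hG : G.Connected) : (ILTstep G).Connected := by
  have hinl : ∀ a : V ⊕ V, (ILTstep G).Reachable a (.inl (Sum.elim id id a)) := by
    rintro (x | x)
    · rfl
    · exact Adj.reachable (Or.inl rfl : (ILTstep G).Adj (.inr x) (.inl x))
  refine (connected_iff _).mpr ⟨fun a b => ?_, ⟨.inl hG.nonempty.some⟩⟩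
  exact (hinl a).trans <| ((hG _ _).map (ILTstep.inlHom G)).trans (hinl b).symm

variable {G}

lemma dist_elim_le_ILTstep_dist (hG : G.Connected) (a b : V ⊕ V) :
    G.dist (Sum.elim id id a) (Sum.elim id id b) ≤ (ILTstep G).dist a b := by
  have hle : ∀ {x y : V}, x = y ∨ G.Adj x y → G.dist x y ≤ 1 := by
    rintro x y (rfl | h)
    · simp
    · exact (dist_eq_one_iff_adj.mpr h).le
  refine hG.dist_le_dist_of_forall_adj _ (fun a b hab => ?_) ((ILTstep_connected G hG) a b)
  rcases a with x | x <;> rcases b with y | y <;> simp only [ILTstep_adj_inl_inl,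
    ILTstep_adj_inl_inr, ILTstep_adj_inr_inl, ILTstep_not_adj_inr_inr] at hab
  exacts [hle (Or.inr hab), hle hab, hle hab]

lemma ILTstep_dist_inl_inl (hG : G.Connected) (x y : V) :
    (ILTstep G).dist (.inl x) (.inl y) = G.dist x y := by
  refine le_antisymm ?_ (dist_elim_le_ILTstep_dist hG (.inl x) (.inl y))
  obtain ⟨w, hw⟩ := hG.exists_walk_length_eq_dist x y
  exact hw ▸ (w.length_map (ILTstep.inlHom G)) ▸ dist_le _

variable [DecidableEq V]

lemma ILTstep_dist_inl_inr (hG : G.Connected) (x y : V) :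
    (ILTstep G).dist (.inl x) (.inr y) = G.dist x y + if x = y then 1 else 0 := by
  by_cases hxy : x = y
  · simp [hxy]
  obtain ⟨u, hyu, hu⟩ := hG.exists_adj_dist_add_one (Ne.symm hxy)
  refine le_antisymm ?_ ?_
  · calc (ILTstep G).dist (.inl x) (.inr y)
        ≤ (ILTstep G).dist (.inl x) (.inl u) + (ILTstep G).dist (.inl u) (.inr y) :=
          (ILTstep_connected G hG).dist_triangle
      _ = G.dist x y + if x = y then 1 else 0 := by
          have huy : (ILTstep G).Adj (.inl u) (.inr y) := Or.inr hyu.symm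
          rw [ILTstep_dist_inl_inl hG, dist_eq_one_iff_adj.mpr huy, if_neg hxy, add_zero,
            dist_comm, hu, dist_comm]
  · simpa [hxy] using dist_elim_le_ILTstep_dist hG (.inl x) (.inr y)

lemma ILTstep_dist_inr_inl (hG : G.Connected) (x y : V) :
    (ILTstep G).dist (.inr x) (.inl y) = G.dist x y + if x = y then 1 else 0 := by
  rw [dist_comm, ILTstep_dist_inl_inr hG, dist_comm]
  simp only [eq_comm]

variable [DecidableRel G.Adj]

lemma ILTstep_dist_inr_inr (hG : G.Connected) (x y : V) :
    (ILTstep G).dist (.inr x) (.inr y) = G.dist x y + if G.Adj x y then 1 else 0 := by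
  by_cases hxy : x = y
  · simp [hxy]
  obtain ⟨u, hxu, hu⟩ := hG.exists_adj_dist_add_one hxy
  have hupper : (ILTstep G).dist (.inr x) (.inr y) ≤ 1 + (G.dist u y + if u = y then 1 else 0) :=
    calc (ILTstep G).dist (.inr x) (.inr y)
        ≤ (ILTstep G).dist (.inr x) (.inl u) + (ILTstep G).dist (.inl u) (.inr y) :=
          (ILTstep_connected G hG).dist_triangle
      _ = 1 + (G.dist u y + if u = y then 1 else 0) := by
          rw [dist_eq_one_iff_adj.mpr (Or.inr hxu), ILTstep_dist_inl_inr hG]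
  have hlower := dist_elim_le_ILTstep_dist hG (.inr x) (.inr y)
  simp only [Sum.elim_inr, id] at hlower
  by_cases hadj : G.Adj x y
  · have h2 : (ILTstep G).dist (.inr x) (.inr y) ≠ 1 := by simp
    have h0 : 0 < (ILTstep G).dist (.inr x) (.inr y) :=
      (ILTstep_connected G hG _ _).pos_dist_of_ne (by simpa using hxy)
    rw [if_pos hadj, dist_eq_one_iff_adj.mpr hadj]
    rw [dist_eq_one_iff_adj.mpr hadj] at hu
    split_ifs at hupper <;> omega
  · have huy : u ≠ y := fun h => hadj (h ▸ hxu)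
    rw [if_neg hadj]
    rw [if_neg huy] at hupper
    omega

end ILTstep

lemma ILTG_connected (G : SimpleGraph V) (hG : G.Connected) : ∀ t, (ILTG G t).Connected
  | 0 => hG
  | t + 1 => ILTstep_connected _ (ILTG_connected G hG t)

section ILTstepCount

variable [Fintype V] [DecidableEq V] {G : SimpleGraph V} [DecidableRel G.Adj]

lemma ILTstep_card_edgeFinset : #(ILTstep G).edgeFinset = 3 * #G.edgeFinset + Fintype.card V := by
  have hor : ∀ x y : V, (if x = y ∨ G.Adj x y then 1 else 0)
      = (if x = y then 1 else 0) + if G.Adj x y then 1 else 0 := by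
    intro x y
    by_cases h : x = y <;> simp [h]
  have h := sum_sum_adj_ite (G := ILTstep G)
  simp only [Fintype.sum_sum_type, ILTstep_adj_inl_inl, ILTstep_adj_inl_inr, ILTstep_adj_inr_inl,
    ILTstep_not_adj_inr_inr, hor, Finset.sum_add_distrib, sum_sum_adj_ite, Finset.sum_ite_eq,
    Finset.mem_univ, ↓reduceIte, Finset.sum_const, Finset.card_univ, smul_eq_mul, mul_one] at h
  omega

lemma ILTstep_sum_sum_dist (hG : G.Connected) :
    ∑ a, ∑ b, (ILTstep G).dist a b
      = 4 * ∑ x, ∑ y, G.dist x y + 2 * (#G.edgeFinset + Fintype.card V) := by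
  simp only [Fintype.sum_sum_type, ILTstep_dist_inl_inl hG, ILTstep_dist_inl_inr hG,
    ILTstep_dist_inr_inl hG, ILTstep_dist_inr_inr hG, Finset.sum_add_distrib, sum_sum_adj_ite,
    Finset.sum_ite_eq, Finset.mem_univ, ↓reduceIte, Finset.sum_const, Finset.card_univ,
    smul_eq_mul, mul_one]
  ring

lemma wienerIndex_ILTstep (hG : G.Connected) :
    wienerIndex (ILTstep G) = 4 * wienerIndex G + #G.edgeFinset + Fintype.card V := by
  have h := ILTstep_sum_sum_dist hG
  rw [← two_mul_wienerIndex, ← two_mul_wienerIndex] at h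
  omega

end ILTstepCount

section ILTG

variable [Fintype V] [DecidableEq V] (G : SimpleGraph V) [DecidableRel G.Adj]

lemma card_edgeFinset_ILTG_add_card (t : ℕ) :
    #(ILTG G t).edgeFinset + Fintype.card (ILTV V t)
      = 3 ^ t * (#G.edgeFinset + Fintype.card V) := by
  induction t with
  | zero => rw [pow_zero, one_mul]; rfl
  | succ t ih =>
    have hcard : Fintype.card (ILTV V (t + 1)) = 2 * Fintype.card (ILTV V t) := by
      rw [two_mul]
      exact Fintype.card_sum
    have hedge : #(ILTG G (t + 1)).edgeFinset
        = 3 * #(ILTG G t).edgeFinset + Fintype.card (ILTV V t) :=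
      ILTstep_card_edgeFinset
    rw [hcard, hedge, pow_succ, mul_comm _ 3, mul_assoc, ← ih]
    ring

lemma wienerIndex_ILTG_add (hG : G.Connected) (t : ℕ) :
    wienerIndex (ILTG G t) + 3 ^ t * (#G.edgeFinset + Fintype.card V)
      = 4 ^ t * (wienerIndex G + #G.edgeFinset + Fintype.card V) := by
  induction t with
  | zero => rw [pow_zero, one_mul, pow_zero, one_mul, ← add_assoc]; rfl
  | succ t ih =>
    have hstep : wienerIndex (ILTG G (t + 1))
        = 4 * wienerIndex (ILTG G t) + #(ILTG G t).edgeFinset + Fintype.card (ILTV V t) :=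
      wienerIndex_ILTstep (ILTG_connected G hG t)
    have hcount := card_edgeFinset_ILTG_add_card G t
    rw [hstep, pow_succ, pow_succ]
    linarith

end ILTG

theorem ILT_wiener_formula_general [Fintype V] [DecidableEq V]
    (G : SimpleGraph V) [DecidableRel G.Adj] (hG : G.Connected) (t : ℕ) :
    (wienerIndex (ILTG G t) : ℚ)
      = 4 ^ t * ((wienerIndex G : ℚ)
          + ((G.edgeFinset.card : ℚ) + (Fintype.card V : ℚ)) * (1 - (3 / 4) ^ t)) := by
  have h : (wienerIndex (ILTG G t) : ℚ) + 3 ^ t * (#G.edgeFinset + Fintype.card V)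
      = 4 ^ t * (wienerIndex G + #G.edgeFinset + Fintype.card V) := by
    exact_mod_cast wienerIndex_ILTG_add G hG t
  have h34 : (4 : ℚ) ^ t * (3 / 4) ^ t = 3 ^ t := by
    rw [← mul_pow]
    norm_num
  linear_combination h + ((G.edgeFinset.card : ℚ) + Fintype.card V) * h34

theorem ILT_wiener_formula [Fintype V] [DecidableEq V]
    (G : SimpleGraph V) [DecidableRel G.Adj] (hG : G.Connected) (t : ℕ) (ht : 0 < t) :
    (wienerIndex (ILTG G t) : ℚ)
      = 4 ^ t * ((wienerIndex G : ℚ)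
          + ((G.edgeFinset.card : ℚ) + (Fintype.card V : ℚ)) * (1 - (3 / 4) ^ t)) :=
  ILT_wiener_formula_general G hG t
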